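/- arXiv:1110.4693 — 2 statements merged into one kernel-verified Lean document; each statement's English description precedes it below -/
import Mathlib

section
/- Let $p$ be a prime, $r \geq 2$, and $x_1, \ldots, x_r \in \mathbb{F}_p$ distinct elements. Let $\mathcal{M}$ be a nonempty finite subset of an algebraic closure $\overline{\mathbb{F}}_p$ with $4|\mathcal{M}| < p^{1/r}$. Then there exists $j \in \{1, \ldots, r\}$ such that the translate $\mathcal{M} + x_j$ is not contained in $\bigcup_{i \neq j} (\mathcal{M} + x_i)$. -/
/-!
Pigeonholing the `p` multiples `t • x` into `K ^ r < p` boxes (`K = 4 |M|`) gives `t ≠ 0` such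
that every `t * x i` has an integer representative `y i` with `K |y i| < p`; let `y j` be the
largest. On the `𝔽_p`-line through a point of `M` in direction `t⁻¹`, the at most `|M|` points of
`M` leave a gap of length about `p / |M|` right after some `α ∈ M`. As
`0 < y j - y i < p / |M|`, the point `α + x j - x i = α + (y j - y i) t⁻¹` lies in that gap,
so `α + x j ∉ M + x i` for all `i ≠ j`.
-/

open Finset
open scoped Pointwise

theorem ZMod.eq_univ_of_add_one_mem {p : ℕ} [NeZero p] {S : Finset (ZMod p)} (hS : S.Nonempty)
    (h : ∀ z ∈ S, z + 1 ∈ S) : S = univ := by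
  obtain ⟨a, ha⟩ := hS
  have hadd : ∀ n : ℕ, a + n ∈ S := by
    intro n
    induction n with
    | zero => simpa using ha
    | succ n ih => simpa [add_assoc] using h _ ih
  refine eq_univ_of_forall fun z => ?_
  simpa using hadd (z - a).val

theorem ZMod.exists_add_notMem_of_card_mul_lt {p : ℕ} [NeZero p] {A : Finset (ZMod p)}
    (hA : A.Nonempty) {L : ℕ} (hL : #A * L < p) :
    ∃ a ∈ A, ∀ d : ℕ, 0 < d → d ≤ L → a + d ∉ A := by
  classical
  by_contra! h
  obtain ⟨d₀, hd₀, hd₀L, -⟩ := h _ hA.choose_spec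
  have hL0 : L ≠ 0 := by omega
  set S := A + (range L).image (Nat.cast : ℕ → ZMod p)
  have hmem : ∀ a ∈ A, ∀ e < L, a + e ∈ S := fun a ha e he =>
    add_mem_add ha (mem_image_of_mem _ (mem_range.2 he))
  -- `S` is closed under `+ 1`: past `a + (L - 1)`, continue from the successor `a + d ∈ A`.
  have hS : S = univ := by
    refine ZMod.eq_univ_of_add_one_mem (hA.add ((nonempty_range_iff.2 hL0).image _))
      fun z hz => ?_
    obtain ⟨a, ha, _, hc, rfl⟩ := mem_add.1 hz
    obtain ⟨e, he, rfl⟩ := mem_image.1 hc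
    rw [mem_range] at he
    by_cases heL : e + 1 < L
    · simpa [add_assoc] using hmem a ha (e + 1) heL
    · obtain ⟨d, hd, hdL, hdA⟩ := h a ha
      convert hmem _ hdA (L - d) (by omega) using 1
      rw [add_assoc, Nat.cast_sub hdL, show L = e + 1 by omega]
      push_cast
      ring
  have : p ≤ #A * L := calc
    p = #S := by simp [hS]
    _ ≤ #A * #((range L).image (Nat.cast : ℕ → ZMod p)) := card_add_le
    _ ≤ #A * L := Nat.mul_le_mul_left _ (card_image_le.trans (card_range L).le)
  omega

theorem exists_add_algebraMap_notMem {p : ℕ} [Fact p.Prime] {F : Type*} [Ring F] [Nontrivial F]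
    [Algebra (ZMod p) F] {M : Finset F} (hM : M.Nonempty) {s : ZMod p} (hs : s ≠ 0) :
    ∃ α ∈ M, ∀ d : ℕ, 0 < d → #M * d < p → α + algebraMap (ZMod p) F (d * s) ∉ M := by
  classical
  obtain ⟨α₀, hα₀⟩ := hM
  set e : ZMod p → F := fun b => α₀ + algebraMap (ZMod p) F (b * s)
  have he : Function.Injective e := fun b c hbc =>
    mul_right_cancel₀ hs ((algebraMap (ZMod p) F).injective (add_left_cancel hbc))
  set A := univ.filter (e · ∈ M)
  have hA0 : (0 : ZMod p) ∈ A := by simpa [A, e] using hα₀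
  have hAM : #A ≤ #M := card_le_card_of_injOn e (fun b hb => (mem_filter.1 hb).2) he.injOn
  have hM0 : 0 < #M := card_pos.2 ⟨α₀, hα₀⟩
  have hL : #A * ((p - 1) / #M) < p := calc
    #A * ((p - 1) / #M) ≤ #M * ((p - 1) / #M) := Nat.mul_le_mul_right _ hAM
    _ ≤ p - 1 := Nat.mul_div_le _ _
    _ < p := Nat.sub_lt (Fact.out : p.Prime).pos one_pos
  obtain ⟨a, ha, hgap⟩ := ZMod.exists_add_notMem_of_card_mul_lt ⟨0, hA0⟩ hL
  refine ⟨e a, (mem_filter.1 ha).2, fun d hd hdM hmem => hgap d hd ?_ ?_⟩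
  · rw [Nat.le_div_iff_mul_le hM0, mul_comm]
    omega
  · simpa [A, e, add_mul, add_assoc] using hmem

theorem ZMod.exists_ne_zero_mul_eq_intCast_of_pow_lt {p : ℕ} {ι : Type*} [Fintype ι]
    (x : ι → ZMod p) {K : ℕ} (hK : 0 < K) (hKp : K ^ Fintype.card ι < p) :
    ∃ t : ZMod p, t ≠ 0 ∧ ∃ y : ι → ℤ, ∀ i, (y i : ZMod p) = t * x i ∧ K * |y i| < p := by
  classical
  have : NeZero p := NeZero.of_pos (by omega)
  obtain ⟨q, hq, hpq, hqp⟩ : ∃ q, 0 < q ∧ p ≤ K * q ∧ K * (q - 1) < p := by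
    refine ⟨(p - 1) / K + 1, Nat.succ_pos _, ?_, ?_⟩
    · rw [Nat.mul_succ]
      have := Nat.div_add_mod (p - 1) K
      have := Nat.mod_lt (p - 1) hK
      omega
    · have := Nat.mul_div_le (p - 1) K
      rw [Nat.add_sub_cancel]
      omega
  have hbox : ∀ v : ZMod p, v.val / q < K := fun v =>
    Nat.div_lt_of_lt_mul (by rw [mul_comm]; exact v.val_lt.trans_le hpq)
  have hcard : Fintype.card (ι → Fin K) < Fintype.card (ZMod p) := by simpa using hKp
  obtain ⟨t₁, t₂, hne, hbox_eq⟩ := Fintype.exists_ne_map_eq_of_card_lt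
    (fun t i => (⟨(t * x i).val / q, hbox _⟩ : Fin K)) hcard
  refine ⟨t₁ - t₂, sub_ne_zero.2 hne, fun i => (t₁ * x i).val - (t₂ * x i).val, fun i => ⟨?_, ?_⟩⟩
  · push_cast
    simp [sub_mul]
  · have hdiv : (t₁ * x i).val / q = (t₂ * x i).val / q := congrArg Fin.val (congrFun hbox_eq i)
    have hu := Nat.div_add_mod (t₁ * x i).val q
    rw [hdiv] at hu
    have hv := Nat.div_add_mod (t₂ * x i).val q
    have hu' := Nat.mod_lt (t₁ * x i).val hq
    have hv' := Nat.mod_lt (t₂ * x i).val hq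
    have habs : |((t₁ * x i).val : ℤ) - (t₂ * x i).val| ≤ (q - 1 : ℕ) := by
      rw [abs_le]; constructor <;> omega
    calc (K : ℤ) * |((t₁ * x i).val : ℤ) - (t₂ * x i).val| ≤ K * (q - 1 : ℕ) := by gcongr
      _ < p := by exact_mod_cast hqp

theorem stmt_9 (p : ℕ) [Fact p.Prime] (r : ℕ) (hr : 2 ≤ r) (x : Fin r → ZMod p)
    (hx : Function.Injective x)
    (M : Finset (AlgebraicClosure (ZMod p))) (hM : M.Nonempty)
    (hcard : (4 * M.card : ℝ) < (p : ℝ) ^ ((1 : ℝ) / r)) :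
    ∃ j : Fin r, ∃ α ∈ M, ∀ i : Fin r, i ≠ j → ∀ β ∈ M,
      β + algebraMap (ZMod p) (AlgebraicClosure (ZMod p)) (x i) ≠
        α + algebraMap (ZMod p) (AlgebraicClosure (ZMod p)) (x j) := by
  have hKp : (4 * #M) ^ Fintype.card (Fin r) < p := by
    have h := pow_lt_pow_left₀ hcard (by positivity) (by omega : r ≠ 0)
    rw [one_div, Real.rpow_inv_natCast_pow (by positivity) (by omega)] at h
    rw [Fintype.card_fin]
    exact_mod_cast h
  obtain ⟨t, ht, y, hy⟩ := ZMod.exists_ne_zero_mul_eq_intCast_of_pow_lt x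
    (by have := hM.card_pos; omega) hKp
  have hy_inj : Function.Injective y := fun i k hik =>
    hx (mul_left_cancel₀ ht (by rw [← (hy i).1, ← (hy k).1, hik]))
  have : Nonempty (Fin r) := ⟨⟨0, by omega⟩⟩
  obtain ⟨j, hj⟩ := Finite.exists_max y
  obtain ⟨α, hα, hgap⟩ := exists_add_algebraMap_notMem hM (inv_ne_zero ht)
  refine ⟨j, α, hα, fun i hij β hβ heq => ?_⟩
  obtain ⟨d, hd⟩ : ∃ d : ℕ, (d : ℤ) = y j - y i := ⟨_, Int.toNat_of_nonneg (sub_nonneg.2 (hj i))⟩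
  refine hgap d ?_ ?_ ?_
  · have := hy_inj.ne hij
    have := hj i
    omega
  · have hi := (hy i).2
    have hj' := (hy j).2
    push_cast at hi hj'
    zify
    calc (#M : ℤ) * d ≤ #M * (|y j| + |y i|) := by
          gcongr; linarith [le_abs_self (y j), neg_abs_le (y i)]
      _ < p := by linarith
  · have hdt : (d : ZMod p) * t⁻¹ = x j - x i := by
      rw [← Int.cast_natCast, hd, Int.cast_sub, (hy i).1, (hy j).1, ← mul_sub, mul_comm t,
        mul_inv_cancel_right₀ ht]
    rw [hdt, map_sub, show α + (_ - _) = β by linear_combination -heq]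
    exact hβ
end

section
/- Let $m \geq 2$, $\ell \geq 2$, $L \geq 1$ be integers with $\gcd(\ell, m) = 1$. For vectors $\mathbf{v} = (v_1, \ldots, v_L)$, $\mathbf{v}' = (v_1', \ldots, v_L') \in \mu_\ell^L$ and integer $a$, define $S(\mathbf{v},\mathbf{v}',a) = \sum_{x=1}^{L} \sum_{t=1}^{m-1} e_m\big(t(\sum_{j=1}^x F(v_j) - \sum_{j=1}^x F(v_j') - a)\big)$, where $F(v) = \ell$ if $v = 1$ and $F(v) = 0$ otherwise. Then $\sum_{a=0}^{m-1} \sum_{\mathbf{v}, \mathbf{v}' \in \mu_\ell^L} |S(\mathbf{v}, \mathbf{v}', a)|^2 \leq 7 m^4 L \ell^{2L+2}$. -/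
open Real

noncomputable def eAdd (m : ℕ) (z : ℝ) : ℂ := Complex.exp (2 * π * Complex.I * z / m)

noncomputable def Froots (ℓ : ℕ) (v : ℂ) : ℕ := if v = 1 then ℓ else 0

/-!
Summing over `a` first (orthogonality of additive characters mod `m`) turns the left side into
`m ∑_{0<t<m} ∑_{v,v'} |∑_x e_m(t A_v(x)) conj e_m(t A_{v'}(x))|²`, with `A_v(x) = ∑_{j ≤ x} F(v_j)`.
Since the Frobenius norms of `M Mᴴ` and `Mᴴ M` agree, this is
`m ∑_t ∑_{x,x'} |∑_v e_m(t(A_v(x) - A_v(x')))|²`, and the inner sum factors over coordinates into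
`W^d ℓ^(L-d)` up to conjugation, with `W = e_m(tℓ) + ℓ - 1` and `d = |x - x'|`. As `gcd(ℓ, m) = 1`,
`m ∤ tℓ`, whence `cos(2πtℓ/m) ≤ 1 - 8/m²` and `|W|² ≤ ℓ²ρ` for `ρ = 1 - 8/(ℓm²)`; the geometric
bound `∑_{x,x'} ρ^|x-x'| ≤ 2L/(1-ρ)` finishes the estimate.
-/

open Finset ComplexConjugate

section eAdd

variable (m : ℕ)

lemma eAdd_zero : eAdd m 0 = 1 := by simp [eAdd]

lemma eAdd_add (z w : ℝ) : eAdd m (z + w) = eAdd m z * eAdd m w := by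
  rw [eAdd, eAdd, eAdd, ← Complex.exp_add]; congr 1; push_cast; ring

lemma eAdd_neg (z : ℝ) : eAdd m (-z) = conj (eAdd m z) := by
  rw [eAdd, eAdd, ← Complex.exp_conj]; congr 1; simp [map_ofNat]

lemma eAdd_sub (z w : ℝ) : eAdd m (z - w) = eAdd m z * conj (eAdd m w) := by
  rw [sub_eq_add_neg, eAdd_add, eAdd_neg]

lemma eAdd_sum {ι : Type*} (s : Finset ι) (f : ι → ℝ) :
    eAdd m (∑ j ∈ s, f j) = ∏ j ∈ s, eAdd m (f j) := by
  simp only [eAdd, ← Complex.exp_sum]; congr 1; push_cast; rw [mul_sum, sum_div]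

lemma eAdd_eq_exp_mul_I (z : ℝ) :
    eAdd m z = Complex.exp ((2 * π * z / m : ℝ) * Complex.I) := by
  rw [eAdd]; congr 1; push_cast; ring

lemma eAdd_intCast_mul (k : ℤ) (a : ℕ) :
    eAdd m (k * a) = (Complex.exp (2 * π * Complex.I / m) ^ k) ^ a := by
  rw [← zpow_natCast, ← zpow_mul, ← Complex.exp_int_mul, eAdd]; congr 1; push_cast; ring

lemma sum_range_eAdd_intCast_mul (k : ℤ) :
    ∑ a ∈ range m, eAdd m (k * a) = if (m : ℤ) ∣ k then (m : ℂ) else 0 := by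
  rcases eq_or_ne m 0 with rfl | hm
  · simp
  have hζ := Complex.isPrimitiveRoot_exp m hm
  simp only [eAdd_intCast_mul]
  split_ifs with hk
  · simp [hζ.zpow_eq_one_iff_dvd k |>.mpr hk]
  · rw [geom_sum_eq (mt (hζ.zpow_eq_one_iff_dvd k).mp hk), ← zpow_natCast, ← zpow_mul,
      mul_comm k, zpow_mul, zpow_natCast, hζ.pow_eq_one, one_zpow, sub_self, zero_div]

lemma sum_range_norm_sq_sum_mul_conj_eAdd (s : Finset ℕ) (hs : ∀ t ∈ s, t < m) (c : ℕ → ℂ) :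
    ∑ a ∈ range m, ‖∑ t ∈ s, c t * conj (eAdd m (t * a))‖ ^ 2 =
      m * ∑ t ∈ s, ‖c t‖ ^ 2 := by
  apply Complex.ofReal_injective
  push_cast
  simp only [← Complex.mul_conj', map_sum, map_mul, Complex.conj_conj, sum_mul_sum]
  rw [sum_comm, mul_sum]
  refine sum_congr rfl fun t ht => ?_
  have orth (t' : ℕ) (ht' : t' ∈ s) :
      ∑ a ∈ range m, c t * conj (eAdd m (t * a)) * (conj (c t') * eAdd m (t' * a)) =
        c t * conj (c t') * if t' = t then (m : ℂ) else 0 := by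
    have h (a : ℕ) : c t * conj (eAdd m (t * a)) * (conj (c t') * eAdd m (t' * a)) =
        c t * conj (c t') * eAdd m (((t' - t : ℤ) : ℝ) * a) := by
      rw [show ((t' - t : ℤ) : ℝ) * a = t' * a - t * a by push_cast; ring, eAdd_sub]; ring
    have hdvd : (m : ℤ) ∣ (t' - t : ℤ) ↔ t' = t := by
      refine ⟨fun hd => ?_, fun h => by simp [h]⟩
      have := hs t ht
      have := hs t' ht'
      have := Int.eq_zero_of_abs_lt_dvd hd (by rw [abs_lt]; omega)
      omega
    simp only [h, ← mul_sum, sum_range_eAdd_intCast_mul, hdvd]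
  rw [sum_comm, sum_congr rfl fun t' ht' => orth t' ht']
  simp [mul_comm, ht]

lemma sum_range_norm_sq_sum_sum_eAdd {ι : Type*} (T : Finset ι) (y y' : ι → ℝ) :
    ∑ a ∈ range m, ‖∑ x ∈ T, ∑ t ∈ Icc 1 (m - 1), eAdd m (t * (y x - y' x - a))‖ ^ 2 =
      m * ∑ t ∈ Icc 1 (m - 1), ‖∑ x ∈ T, eAdd m (t * y x) * conj (eAdd m (t * y' x))‖ ^ 2 := by
  have hsplit (a : ℕ) : ∑ x ∈ T, ∑ t ∈ Icc 1 (m - 1), eAdd m (t * (y x - y' x - a)) =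
      ∑ t ∈ Icc 1 (m - 1),
        (∑ x ∈ T, eAdd m (t * y x) * conj (eAdd m (t * y' x))) * conj (eAdd m (t * a)) := by
    rw [sum_comm]
    refine sum_congr rfl fun t _ => ?_
    rw [sum_mul]
    refine sum_congr rfl fun x _ => ?_
    rw [← eAdd_sub, ← eAdd_sub]
    ring_nf
  simp only [hsplit]
  exact sum_range_norm_sq_sum_mul_conj_eAdd m _ (fun t ht => by simp at ht; omega) _

end eAdd

lemma sum_sum_norm_sq_sum_mul_conj {α ι : Type*} (s : Finset α) (T : Finset ι)
    (f : α → ι → ℂ) :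
    ∑ v ∈ s, ∑ v' ∈ s, ‖∑ x ∈ T, f v x * conj (f v' x)‖ ^ 2 =
      ∑ x ∈ T, ∑ x' ∈ T, ‖∑ v ∈ s, f v x * conj (f v x')‖ ^ 2 := by
  apply Complex.ofReal_injective
  push_cast
  simp only [← Complex.mul_conj', map_sum, map_mul, Complex.conj_conj, sum_mul_sum,
    ← sum_product']
  refine sum_nbij' (fun p => (p.2.2.1, p.2.2.2, p.1, p.2.1))
    (fun q => (q.2.2.1, q.2.2.2, q.1, q.2.1)) ?_ ?_ ?_ ?_ ?_ <;> simp +contextual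
  intros; ring

lemma sum_piFinset_prod_mem {ι κ R : Type*} [Fintype ι] [DecidableEq ι] [CommSemiring R]
    (s : Finset ι) (S : Finset κ) (g : κ → R) :
    ∑ f ∈ Fintype.piFinset (fun _ : ι => S), ∏ i ∈ s, g (f i) =
      (∑ k ∈ S, g k) ^ #s * (#S : R) ^ (Fintype.card ι - #s) := by
  have h (f : ι → κ) : ∏ i ∈ s, g (f i) = ∏ i, if i ∈ s then g (f i) else 1 := by
    rw [prod_ite_mem, univ_inter]
  simp only [h]
  rw [sum_prod_piFinset S (fun i k => if i ∈ s then g k else 1)]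
  simp only [sum_ite_irrel, sum_const, nsmul_one]
  rw [prod_ite, prod_const, prod_const, filter_not, card_sdiff_of_subset (filter_subset _ _)]
  simp

noncomputable abbrev rootTuples (ℓ L : ℕ) : Finset (Fin L → ℂ) :=
  Fintype.piFinset fun _ => (Polynomial.nthRoots ℓ (1 : ℂ)).toFinset

noncomputable abbrev partialSumFroots (ℓ : ℕ) {L : ℕ} (v : Fin L → ℂ) (x : Fin L) : ℝ :=
  ∑ j ∈ Iic x, (Froots ℓ (v j) : ℝ)

lemma sum_eAdd_mul_Froots (m ℓ : ℕ) (S : Finset ℂ) (hS : 1 ∈ S) (c : ℝ) :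
    ∑ v ∈ S, eAdd m (c * Froots ℓ v) = eAdd m (c * ℓ) + (#S - 1) := by
  rw [← add_sum_erase _ _ hS,
    sum_congr rfl fun v hv => by rw [Froots, if_neg (ne_of_mem_erase hv)]]
  simp [Froots, eAdd_zero, card_erase_of_mem hS, Nat.cast_sub (card_pos.mpr ⟨1, hS⟩)]

lemma card_nthRoots_one_toFinset {ℓ : ℕ} (hℓ : ℓ ≠ 0) :
    #(Polynomial.nthRoots ℓ (1 : ℂ)).toFinset = ℓ := by
  rw [← Polynomial.nthRootsFinset_def]
  exact (Complex.isPrimitiveRoot_exp ℓ hℓ).card_nthRootsFinset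

lemma sum_rootTuples_eAdd_mul_sum_Froots (m : ℕ) {ℓ : ℕ} (hℓ : ℓ ≠ 0) {L : ℕ} (c : ℝ)
    (s : Finset (Fin L)) :
    ∑ v ∈ rootTuples ℓ L, eAdd m (c * ∑ j ∈ s, (Froots ℓ (v j) : ℝ)) =
      (eAdd m (c * ℓ) + (ℓ - 1)) ^ #s * (ℓ : ℂ) ^ (L - #s) := by
  simp only [mul_sum, eAdd_sum]
  rw [sum_piFinset_prod_mem s _ (fun v => eAdd m (c * Froots ℓ v)), Fintype.card_fin,
    sum_eAdd_mul_Froots _ _ _ (by simp [Nat.pos_of_ne_zero hℓ]), card_nthRoots_one_toFinset hℓ]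

lemma norm_sum_rootTuples_eAdd_mul_partialSumFroots_sub (m : ℕ) {ℓ : ℕ} (hℓ : ℓ ≠ 0) {L : ℕ}
    (c : ℝ) (x x' : Fin L) :
    ‖∑ v ∈ rootTuples ℓ L, eAdd m (c * (partialSumFroots ℓ v x - partialSumFroots ℓ v x'))‖ =
      ‖eAdd m (c * ℓ) + (ℓ - 1)‖ ^ Nat.dist x x' * (ℓ : ℝ) ^ (L - Nat.dist x x') := by
  wlog h : x' ≤ x generalizing x x'
  · rw [Nat.dist_comm, ← this x' x (le_of_not_ge h), ← Complex.norm_conj, map_sum]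
    congr 1
    refine sum_congr rfl fun v _ => ?_
    rw [← eAdd_neg]
    ring_nf
  have hsplit (v : Fin L → ℂ) : partialSumFroots ℓ v x - partialSumFroots ℓ v x' =
      ∑ j ∈ Iic x \ Iic x', (Froots ℓ (v j) : ℝ) :=
    (sum_sdiff_eq_sub (Iic_subset_Iic.mpr h)).symm
  simp only [hsplit]
  rw [sum_rootTuples_eAdd_mul_sum_Froots m hℓ, card_sdiff_of_subset (Iic_subset_Iic.mpr h),
    Fin.card_Iic, Fin.card_Iic, Nat.dist_eq_sub_of_le_right (Fin.le_def.mp h)]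
  simp [Nat.add_sub_add_right]

lemma norm_sq_eAdd_add_ofReal (m : ℕ) (z b : ℝ) :
    ‖eAdd m z + b‖ ^ 2 = 1 + 2 * b * cos (2 * π * z / m) + b ^ 2 := by
  rw [eAdd_eq_exp_mul_I, Complex.exp_mul_I, ← Complex.ofReal_cos, ← Complex.ofReal_sin,
    Complex.sq_norm, add_right_comm, ← Complex.ofReal_add, Complex.normSq_add_mul_I]
  nlinarith [sin_sq_add_cos_sq (2 * π * z / m)]

-- Pass to the balanced residue `b` of `n`, so `|b| ≤ m / 2`, and use `cos x ≤ 1 - 2x²/π²`.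
lemma cos_two_pi_intCast_div_le (m : ℕ) {n : ℤ} (hn : ¬ (m : ℤ) ∣ n) :
    cos (2 * π * n / m) ≤ 1 - 8 / m ^ 2 := by
  rcases eq_or_ne m 0 with rfl | hm
  · simp
  have hm' : (0 : ℝ) < m := by positivity
  set b := n.bmod m
  obtain ⟨k, hk⟩ : (m : ℤ) ∣ n - b := Int.ModEq.dvd Int.bmod_emod
  have hb0 : b ≠ 0 := fun h => hn ⟨k, by rw [← hk, h, sub_zero]⟩
  have hbm : 2 * |(b : ℝ)| ≤ m := by
    have : -((m : ℤ) / 2) ≤ b := Int.le_bmod (by omega)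
    have : b < ((m : ℤ) + 1) / 2 := Int.bmod_lt (by omega)
    have : 2 * |b| ≤ m := by rcases abs_cases b with ⟨h, -⟩ | ⟨h, -⟩ <;> omega
    exact_mod_cast this
  have hb1 : (1 : ℝ) ≤ (b : ℝ) ^ 2 := by
    rw [← sq_abs]; exact_mod_cast one_le_pow₀ (Int.one_le_abs hb0)
  have hperiod : cos (2 * π * n / m) = cos (2 * π * b / m) := by
    rw [← cos_add_int_mul_two_pi (2 * π * b / m) k]
    congr 1
    rw [show (n : ℝ) = b + m * k by exact_mod_cast (sub_eq_iff_eq_add'.mp hk)]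
    field_simp
  have habs : |2 * π * b / m| ≤ π := by
    rw [abs_div, abs_mul, abs_of_pos (by positivity : 0 < 2 * π), abs_of_pos hm', div_le_iff₀ hm']
    nlinarith [pi_pos]
  calc cos (2 * π * n / m) = cos (2 * π * b / m) := hperiod
    _ ≤ 1 - 2 / π ^ 2 * (2 * π * b / m) ^ 2 := cos_le_one_sub_mul_cos_sq habs
    _ = 1 - 8 * b ^ 2 / m ^ 2 := by field_simp; ring
    _ ≤ 1 - 8 / m ^ 2 := by gcongr; linarith

lemma norm_sq_eAdd_intCast_add_le (m : ℕ) {ℓ : ℕ} (hℓ : 2 ≤ ℓ) {n : ℤ} (hn : ¬ (m : ℤ) ∣ n) :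
    ‖eAdd m n + (ℓ - 1)‖ ^ 2 ≤ (ℓ : ℝ) ^ 2 * (1 - 8 / (ℓ * m ^ 2)) := by
  have hℓ' : (2 : ℝ) ≤ ℓ := by exact_mod_cast hℓ
  have key := norm_sq_eAdd_add_ofReal m n (ℓ - 1)
  push_cast at key
  rw [key]
  calc (1 : ℝ) + 2 * (ℓ - 1) * cos (2 * π * n / m) + (ℓ - 1) ^ 2
      ≤ 1 + 2 * (ℓ - 1) * (1 - 8 / m ^ 2) + (ℓ - 1) ^ 2 := by
        gcongr
        · linarith
        · exact cos_two_pi_intCast_div_le m hn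
    _ = (ℓ : ℝ) ^ 2 - 16 * ((ℓ : ℝ) - 1) / (m : ℝ) ^ 2 := by ring
    _ ≤ (ℓ : ℝ) ^ 2 - 8 * ℓ / (m : ℝ) ^ 2 :=
        sub_le_sub_left (div_le_div_of_nonneg_right (by linarith) (by positivity)) _
    _ = (ℓ : ℝ) ^ 2 * (1 - 8 / (ℓ * m ^ 2)) := by field_simp

-- Each value `k` of `Nat.dist x y` is taken by at most two `y`, namely `x - k` and `x + k`.
lemma sum_range_pow_dist_le {ρ : ℝ} (hρ0 : 0 ≤ ρ) (hρ1 : ρ < 1) (x L : ℕ) :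
    ∑ y ∈ range L, ρ ^ Nat.dist x y ≤ 2 / (1 - ρ) := by
  have hmaps : ∀ y ∈ range L, Nat.dist x y ∈ range (x + L) := fun y hy => by
    rw [mem_range] at *; unfold Nat.dist; omega
  have hfiber (k : ℕ) : #{y ∈ range L | Nat.dist x y = k} ≤ 2 :=
    (card_le_card fun y hy => by
      have := (mem_filter.mp hy).2
      unfold Nat.dist at this
      simp only [mem_insert, mem_singleton]
      omega).trans
      (card_le_two (a := x - k) (b := x + k))
  calc ∑ y ∈ range L, ρ ^ Nat.dist x y
      = ∑ k ∈ range (x + L), #{y ∈ range L | Nat.dist x y = k} * ρ ^ k := by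
        rw [← sum_fiberwise_of_maps_to hmaps]
        refine sum_congr rfl fun k _ => ?_
        rw [sum_congr rfl fun y hy => by rw [(mem_filter.mp hy).2], sum_const, nsmul_eq_mul]
    _ ≤ ∑ k ∈ range (x + L), 2 * ρ ^ k := by gcongr with k; exact_mod_cast hfiber k
    _ ≤ 2 / (1 - ρ) := by
        rw [← mul_sum, div_eq_mul_one_div 2, range_eq_Ico]
        gcongr
        simpa using geom_sum_Ico_le_of_lt_one (m := 0) (n := x + L) hρ0 hρ1

lemma sum_sum_pow_dist_le {ρ : ℝ} (hρ0 : 0 ≤ ρ) (hρ1 : ρ < 1) (L : ℕ) :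
    ∑ x : Fin L, ∑ x' : Fin L, ρ ^ Nat.dist x x' ≤ 2 * L / (1 - ρ) := by
  calc ∑ x : Fin L, ∑ x' : Fin L, ρ ^ Nat.dist x x' ≤ ∑ _x : Fin L, 2 / (1 - ρ) :=
        sum_le_sum fun x _ => by
          rw [Fin.sum_univ_eq_sum_range (fun y => ρ ^ Nat.dist x y)]
          exact sum_range_pow_dist_le hρ0 hρ1 x L
    _ = 2 * L / (1 - ρ) := by simp; ring

lemma sum_sum_norm_sq_sum_rootTuples_le {m : ℕ} (hm : m ≠ 0) {ℓ : ℕ} (hℓ : 2 ≤ ℓ) (L : ℕ)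
    {t : ℕ} (ht : ¬ (m : ℤ) ∣ t * ℓ) :
    ∑ x : Fin L, ∑ x' : Fin L, ‖∑ v ∈ rootTuples ℓ L,
        eAdd m (t * partialSumFroots ℓ v x) * conj (eAdd m (t * partialSumFroots ℓ v x'))‖ ^ 2 ≤
      (ℓ : ℝ) ^ (2 * L) * (L * ℓ * m ^ 2 / 4) := by
  set ρ : ℝ := 1 - 8 / (ℓ * m ^ 2)
  have hW : ‖eAdd m (t * ℓ) + (ℓ - 1)‖ ^ 2 ≤ (ℓ : ℝ) ^ 2 * ρ := by
    simpa using norm_sq_eAdd_intCast_add_le m hℓ ht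
  have hρ0 : 0 ≤ ρ := nonneg_of_mul_nonneg_right ((sq_nonneg _).trans hW) (by positivity)
  have hρ1 : ρ < 1 := sub_lt_self 1 (by positivity)
  have hterm (x x' : Fin L) : ‖∑ v ∈ rootTuples ℓ L,
        eAdd m (t * partialSumFroots ℓ v x) * conj (eAdd m (t * partialSumFroots ℓ v x'))‖ ^ 2 ≤
      (ℓ : ℝ) ^ (2 * L) * ρ ^ Nat.dist x x' := by
    simp only [← eAdd_sub, ← mul_sub]
    rw [norm_sum_rootTuples_eAdd_mul_partialSumFroots_sub m (by omega), mul_pow, ← pow_mul,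
      ← pow_mul, mul_comm _ 2, pow_mul]
    have hd : Nat.dist x x' ≤ L := by unfold Nat.dist; omega
    calc (‖eAdd m (t * ℓ) + (ℓ - 1)‖ ^ 2) ^ Nat.dist x x' * (ℓ : ℝ) ^ ((L - Nat.dist x x') * 2)
        ≤ ((ℓ : ℝ) ^ 2 * ρ) ^ Nat.dist x x' * (ℓ : ℝ) ^ ((L - Nat.dist x x') * 2) := by gcongr
      _ = (ℓ : ℝ) ^ (2 * L) * ρ ^ Nat.dist x x' := by
          rw [mul_pow, ← pow_mul, mul_right_comm, ← pow_add]; congr 2; omega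
  calc _ ≤ ∑ x : Fin L, ∑ x' : Fin L, (ℓ : ℝ) ^ (2 * L) * ρ ^ Nat.dist x x' := by
        gcongr with x _ x' _; exact hterm x x'
    _ = (ℓ : ℝ) ^ (2 * L) * ∑ x : Fin L, ∑ x' : Fin L, ρ ^ Nat.dist x x' := by
        simp only [mul_sum]
    _ ≤ (ℓ : ℝ) ^ (2 * L) * (2 * L / (1 - ρ)) := by gcongr; exact sum_sum_pow_dist_le hρ0 hρ1 L
    _ = (ℓ : ℝ) ^ (2 * L) * (L * ℓ * m ^ 2 / 4) := by simp only [ρ]; field_simp; ring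

lemma not_intCast_dvd_mul_of_coprime {m ℓ t : ℕ} (hgcd : Nat.gcd ℓ m = 1) (ht0 : 0 < t)
    (htm : t < m) : ¬ (m : ℤ) ∣ t * ℓ := by
  norm_cast
  rw [(Nat.coprime_comm.mp hgcd).dvd_mul_right]
  exact Nat.not_dvd_of_pos_of_lt ht0 htm

theorem stmt_12_general (m ℓ L : ℕ) (hm : 2 ≤ m) (hℓ : 2 ≤ ℓ)
    (hgcd : Nat.gcd ℓ m = 1) :
    ∑ a ∈ Finset.range m,
      ∑ v ∈ Fintype.piFinset (fun _ : Fin L => (Polynomial.nthRoots ℓ (1 : ℂ)).toFinset),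
        ∑ v' ∈ Fintype.piFinset (fun _ : Fin L => (Polynomial.nthRoots ℓ (1 : ℂ)).toFinset),
          ‖∑ x : Fin L, ∑ t ∈ Finset.Icc 1 (m - 1),
              eAdd m ((t : ℝ) * ((∑ j ∈ Finset.Iic x, (Froots ℓ (v j) : ℝ)) -
                (∑ j ∈ Finset.Iic x, (Froots ℓ (v' j) : ℝ)) - a))‖ ^ 2 ≤
      7 * (m : ℝ) ^ 4 * L * (ℓ : ℝ) ^ (2 * L + 2) := by
  set f : (Fin L → ℂ) → ℕ → Fin L → ℂ := fun v t x => eAdd m (t * partialSumFroots ℓ v x)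
  calc _ = ∑ v ∈ rootTuples ℓ L, ∑ v' ∈ rootTuples ℓ L,
        m * ∑ t ∈ Icc 1 (m - 1), ‖∑ x : Fin L, f v t x * conj (f v' t x)‖ ^ 2 := by
        rw [sum_comm]
        refine sum_congr rfl fun v _ => ?_
        rw [sum_comm]
        exact sum_congr rfl fun v' _ => sum_range_norm_sq_sum_sum_eAdd m univ
          (partialSumFroots ℓ v) (partialSumFroots ℓ v')
    _ = m * ∑ t ∈ Icc 1 (m - 1), ∑ x : Fin L, ∑ x' : Fin L,
        ‖∑ v ∈ rootTuples ℓ L, f v t x * conj (f v t x')‖ ^ 2 := by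
        simp only [← mul_sum]
        rw [sum_congr rfl fun v _ => sum_comm, sum_comm]
        exact congrArg _ (sum_congr rfl fun t _ => sum_sum_norm_sq_sum_mul_conj _ univ (f · t))
    _ ≤ m * ∑ t ∈ Icc 1 (m - 1), (ℓ : ℝ) ^ (2 * L) * (L * ℓ * m ^ 2 / 4) := by
        gcongr with t ht
        rw [mem_Icc] at ht
        exact sum_sum_norm_sq_sum_rootTuples_le (by omega) hℓ L
          (not_intCast_dvd_mul_of_coprime hgcd (by omega) (by omega))
    _ ≤ m * (m * ((ℓ : ℝ) ^ (2 * L) * (L * ℓ * m ^ 2 / 4))) := by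
        rw [sum_const, Nat.card_Icc, nsmul_eq_mul]
        gcongr
        exact_mod_cast (by omega : m - 1 + 1 - 1 ≤ m)
    _ = (m ^ 4 * L * (ℓ : ℝ) ^ (2 * L)) * (ℓ / 4) := by ring
    _ ≤ (m ^ 4 * L * (ℓ : ℝ) ^ (2 * L)) * (7 * ℓ ^ 2) := by
        gcongr
        nlinarith [show (2 : ℝ) ≤ ℓ by exact_mod_cast hℓ]
    _ = 7 * (m : ℝ) ^ 4 * L * (ℓ : ℝ) ^ (2 * L + 2) := by ring

theorem stmt_12 (m ℓ L : ℕ) (hm : 2 ≤ m) (hℓ : 2 ≤ ℓ) (hL : 1 ≤ L)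
    (hgcd : Nat.gcd ℓ m = 1) :
    ∑ a ∈ Finset.range m,
      ∑ v ∈ Fintype.piFinset (fun _ : Fin L => (Polynomial.nthRoots ℓ (1 : ℂ)).toFinset),
        ∑ v' ∈ Fintype.piFinset (fun _ : Fin L => (Polynomial.nthRoots ℓ (1 : ℂ)).toFinset),
          ‖∑ x : Fin L, ∑ t ∈ Finset.Icc 1 (m - 1),
              eAdd m ((t : ℝ) * ((∑ j ∈ Finset.Iic x, (Froots ℓ (v j) : ℝ)) -
                (∑ j ∈ Finset.Iic x, (Froots ℓ (v' j) : ℝ)) - a))‖ ^ 2 ≤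
      7 * (m : ℝ) ^ 4 * L * (ℓ : ℝ) ^ (2 * L + 2) :=
  stmt_12_general m ℓ L hm hℓ hgcd
end
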